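/- arXiv:1902.07802 — 3 statements merged into one kernel-verified Lean document; each statement's English description precedes it below -/
import Mathlib

section
/- (Elliptical potential lemma.) Let x_1, …, x_T ∈ ℝ^d satisfy ‖x_t‖₂ ≤ C_context for all t, and assume λ_min(I_d) ≥ max{1, C_context²} (i.e., C_context ≤ 1). Define A_0 = I_d and A_t = I_d + Σ_{τ=1}^t x_τ x_τᵀ. Then Σ_{t=1}^T ‖x_t‖²_{A_{t−1}⁻¹} ≤ 2 log( det(A_T)/det(I_d) ) ≤ 2 [ d log( (trace(I_d) + T C_context²)/d ) − log det(I_d) ]. -/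
open Matrix Finset

/-! By the matrix determinant lemma `det A_{t+1} = det A_t · (1 + u_t)` with
`u_t = ‖x_t‖²_{A_t⁻¹}`, so `log det A_T = ∑ log (1 + u_t)`. Since `A_t ≥ I`, `u_t ≤ ‖x_t‖² ≤ 1`,
and on `[0, 1]` we have `u ≤ 2 log (1 + u)`. The second inequality is AM–GM (Jensen for `log`)
on the eigenvalues of `A_T`, whose sum is `trace A_T ≤ d + T C²`. -/

theorem Real.sum_log_le_card_mul_log_mean {ι : Type*} (s : Finset ι) {z : ι → ℝ}
    (hz : ∀ i ∈ s, 0 < z i) :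
    ∑ i ∈ s, Real.log (z i) ≤ #s * Real.log ((∑ i ∈ s, z i) / #s) := by
  rcases s.eq_empty_or_nonempty with rfl | hs
  · simp
  have hcard : (0 : ℝ) < #s := by exact_mod_cast hs.card_pos
  have jensen := strictConcaveOn_log_Ioi.concaveOn.le_map_sum (t := s)
    (w := fun _ => (#s : ℝ)⁻¹) (p := z) (fun _ _ => by positivity) (by simp [hcard.ne']) hz
  simp only [smul_eq_mul, inv_mul_eq_div, ← Finset.sum_div] at jensen
  rwa [← div_le_iff₀' hcard]

theorem Real.le_two_mul_log_one_add {u : ℝ} (h0 : 0 ≤ u) (h1 : u ≤ 1) :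
    u ≤ 2 * Real.log (1 + u) := by
  have hlog := Real.one_sub_inv_le_log_of_pos (show 0 < 1 + u by linarith)
  have : u / 2 ≤ 1 - (1 + u)⁻¹ := by
    rw [div_le_iff₀ two_pos, ← sub_nonneg]
    field_simp
    nlinarith
  linarith

namespace Matrix

variable {n : Type*} [Fintype n]

theorem posSemidef_vecMulVec_self (v : n → ℝ) : (vecMulVec v v).PosSemidef := by
  simpa using posSemidef_vecMulVec_self_star v

variable [DecidableEq n]

theorem det_add_vecMulVec_self {M : Matrix n n ℝ} (hM : IsUnit M.det) (u : n → ℝ) :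
    (M + vecMulVec u u).det = M.det * (1 + u ⬝ᵥ (M⁻¹ *ᵥ u)) := by
  rw [vecMulVec_eq Unit, det_add_replicateCol_mul_replicateRow hM, det_unique (n := Unit),
    Matrix.mul_assoc, ← replicateCol_mulVec]
  simp

theorem PosSemidef.dotProduct_one_add_inv_mulVec_le {B : Matrix n n ℝ} (hB : B.PosSemidef)
    (v : n → ℝ) : v ⬝ᵥ ((1 + B)⁻¹ *ᵥ v) ≤ v ⬝ᵥ v := by
  have hdet := (isUnit_iff_isUnit_det _).1 (PosDef.one.add_posSemidef hB).isUnit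
  -- with `v = y + B y`, the gap `v ⬝ᵥ v - v ⬝ᵥ y` is `y ⬝ᵥ B y + ‖B y‖² ≥ 0`
  generalize hy : (1 + B)⁻¹ *ᵥ v = y
  have hv : (1 + B) *ᵥ y = v := by rw [← hy, mulVec_mulVec, mul_nonsing_inv _ hdet, one_mulVec]
  rw [add_mulVec, one_mulVec] at hv
  have hBy : 0 ≤ y ⬝ᵥ (B *ᵥ y) := by simpa using hB.dotProduct_mulVec_nonneg y
  have hBy' : 0 ≤ (B *ᵥ y) ⬝ᵥ (B *ᵥ y) := dotProduct_self_star_nonneg _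
  rw [← hv]
  simp only [add_dotProduct, dotProduct_add, dotProduct_comm (B *ᵥ y) y]
  linarith

theorem PosDef.log_det_le {A : Matrix n n ℝ} (hA : A.PosDef) :
    Real.log A.det ≤ Fintype.card n * Real.log (A.trace / Fintype.card n) := by
  have h := Real.sum_log_le_card_mul_log_mean univ fun i _ => hA.eigenvalues_pos i
  rw [← Real.log_prod fun i _ => (hA.eigenvalues_pos i).ne'] at h
  simpa [hA.isHermitian.det_eq_prod_eigenvalues, hA.isHermitian.trace_eq_sum_eigenvalues] using h

end Matrix

section DesignMatrix

variable {n : Type*} [DecidableEq n] (x : ℕ → n → ℝ)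

def designMatrix (t : ℕ) : Matrix n n ℝ := 1 + ∑ τ ∈ range t, vecMulVec (x τ) (x τ)

theorem designMatrix_succ (t : ℕ) :
    designMatrix x (t + 1) = designMatrix x t + vecMulVec (x t) (x t) := by
  simp only [designMatrix, sum_range_succ, add_assoc]

variable [Fintype n]

theorem posDef_designMatrix (t : ℕ) : (designMatrix x t).PosDef :=
  PosDef.one.add_posSemidef (posSemidef_sum _ fun τ _ => posSemidef_vecMulVec_self (x τ))

theorem dotProduct_inv_designMatrix_mulVec_nonneg (t : ℕ) (v : n → ℝ) :
    0 ≤ v ⬝ᵥ ((designMatrix x t)⁻¹ *ᵥ v) := by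
  simpa using (posDef_designMatrix x t).inv.posSemidef.dotProduct_mulVec_nonneg v

theorem dotProduct_inv_designMatrix_mulVec_le (t : ℕ) (v : n → ℝ) :
    v ⬝ᵥ ((designMatrix x t)⁻¹ *ᵥ v) ≤ v ⬝ᵥ v :=
  (posSemidef_sum _ fun τ _ => posSemidef_vecMulVec_self (x τ)).dotProduct_one_add_inv_mulVec_le v

theorem trace_designMatrix (t : ℕ) :
    (designMatrix x t).trace = Fintype.card n + ∑ τ ∈ range t, x τ ⬝ᵥ x τ := by
  simp [designMatrix, trace_sum]

theorem det_designMatrix (t : ℕ) :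
    (designMatrix x t).det = ∏ τ ∈ range t, (1 + x τ ⬝ᵥ ((designMatrix x τ)⁻¹ *ᵥ x τ)) := by
  induction t with
  | zero => simp [designMatrix]
  | succ t ih =>
    rw [designMatrix_succ, det_add_vecMulVec_self
      ((isUnit_iff_isUnit_det _).1 (posDef_designMatrix x t).isUnit), ih, prod_range_succ]

end DesignMatrix

/-- **Elliptical potential lemma.**
Let `x_1, …, x_T ∈ ℝ^d` satisfy `‖x_t‖₂ ≤ C_context` for all `t`, with
`λ_min(I_d) ≥ max{1, C_context²}` (i.e. `C_context ≤ 1`).  With `A_0 = I_d` and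
`A_t = I_d + Σ_{τ≤t} x_τ x_τᵀ`, we have
`Σ_{t=1}^T ‖x_t‖²_{A_{t−1}⁻¹} ≤ 2 log(det(A_T)/det(I_d))
  ≤ 2 [d log((trace(I_d) + T C_context²)/d) − log det(I_d)]`.
(Here the slots are indexed `t = 0, …, T−1`, so that `A t` plays the role of
`A_{t−1}` for the context `x t`.) -/
theorem elliptical_potential_lemma
    {d : ℕ} (hd : 0 < d) (T : ℕ) (Ccontext : ℝ)
    (hC : Ccontext ≤ 1)
    (x : ℕ → Fin d → ℝ)
    (hx : ∀ t, Real.sqrt (x t ⬝ᵥ x t) ≤ Ccontext)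
    (A : ℕ → Matrix (Fin d) (Fin d) ℝ)
    (hA : ∀ t, A t = 1 + ∑ τ ∈ Finset.range t, vecMulVec (x τ) (x τ)) :
    (∑ t ∈ Finset.range T, x t ⬝ᵥ ((A t)⁻¹.mulVec (x t)))
        ≤ 2 * Real.log ((A T).det / (1 : Matrix (Fin d) (Fin d) ℝ).det)
      ∧ 2 * Real.log ((A T).det / (1 : Matrix (Fin d) (Fin d) ℝ).det)
        ≤ 2 * ((d : ℝ) *
              Real.log (((1 : Matrix (Fin d) (Fin d) ℝ).trace + T * Ccontext ^ 2) / d)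
            - Real.log (1 : Matrix (Fin d) (Fin d) ℝ).det) := by
  obtain rfl : A = designMatrix x := funext hA
  have hxC t : 0 ≤ Ccontext ∧ x t ⬝ᵥ x t ≤ Ccontext ^ 2 := Real.sqrt_le_iff.1 (hx t)
  have hC2 : Ccontext ^ 2 ≤ 1 := pow_le_one₀ (hxC 0).1 hC
  have hu t := dotProduct_inv_designMatrix_mulVec_nonneg x t (x t)
  rw [det_one, div_one, Real.log_one, sub_zero, trace_one, Fintype.card_fin]
  constructor
  · rw [det_designMatrix, Real.log_prod fun t _ => by linarith [hu t], mul_sum]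
    exact sum_le_sum fun t _ => Real.le_two_mul_log_one_add (hu t)
      ((dotProduct_inv_designMatrix_mulVec_le x t (x t)).trans ((hxC t).2.trans hC2))
  · have := Fin.pos_iff_nonempty.1 hd
    have htrace : (designMatrix x T).trace ≤ d + T * Ccontext ^ 2 := by
      rw [trace_designMatrix, Fintype.card_fin]
      grw [sum_le_sum fun t _ => (hxC t).2]
      simp
    gcongr 2 * ?_
    calc Real.log (designMatrix x T).det
        ≤ d * Real.log ((designMatrix x T).trace / d) := by
          simpa using (posDef_designMatrix x T).log_det_le
      _ ≤ d * Real.log ((d + T * Ccontext ^ 2) / d) := by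
          gcongr
          exact div_pos (posDef_designMatrix x T).trace_pos (by exact_mod_cast hd)
end

section
/- Let x_{(1)}, …, x_{(N)} ∈ ℝ^d be fixed vectors, let m_1, …, m_N be nonnegative integers, and let A = I_d + Σ_{i=1}^N m_i · x_{(i)} x_{(i)}ᵀ. Then for every n ∈ {1, …, N} with m_n ≥ 1, ‖x_{(n)}‖_{A⁻¹} ≤ √(d / m_n); equivalently, m_n · x_{(n)}ᵀ A⁻¹ x_{(n)} ≤ d. -/
/-!
Put `v = A⁻¹ x` and `s = xᵀ A⁻¹ x = xᵀ v = vᵀ A v`. Every summand of `A` is positive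
semidefinite, so `vᵀ A v ≥ m_n (x_nᵀ v)² = m_n s²`, i.e. `m_n s² ≤ s`, whence `m_n s ≤ 1`.
This is at most `d` as soon as `d ≥ 1`, and for `d = 0` the quadratic form vanishes.
-/

open Matrix Finset

section QuadraticForm

variable {ι R : Type*} [Fintype ι]

theorem dotProduct_vecMulVec_self_mulVec [CommRing R] (x y : ι → R) :
    y ⬝ᵥ vecMulVec x x *ᵥ y = (x ⬝ᵥ y) ^ 2 := by
  rw [vecMulVec_mulVec, op_smul_eq_smul, dotProduct_smul, smul_eq_mul, dotProduct_comm, sq]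

theorem dotProduct_one_add_sum_smul_vecMulVec_mulVec [CommRing R] [DecidableEq ι]
    {κ : Type*} [Fintype κ] (x : κ → ι → R) (c : κ → R) (y : ι → R) :
    y ⬝ᵥ (1 + ∑ i, c i • vecMulVec (x i) (x i)) *ᵥ y = y ⬝ᵥ y + ∑ i, c i * (x i ⬝ᵥ y) ^ 2 := by
  simp only [add_mulVec, one_mulVec, dotProduct_add, sum_mulVec, dotProduct_sum, smul_mulVec,
    dotProduct_smul, smul_eq_mul, dotProduct_vecMulVec_self_mulVec]

theorem mul_dotProduct_inv_mulVec_le_one [Field R] [LinearOrder R] [IsStrictOrderedRing R]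
    [DecidableEq ι] {A : Matrix ι ι R} (hA : IsUnit A.det) {x : ι → R} {c : R} (hc : 0 ≤ c)
    (hx : ∀ y, c * (x ⬝ᵥ y) ^ 2 ≤ y ⬝ᵥ A *ᵥ y) :
    c * (x ⬝ᵥ A⁻¹ *ᵥ x) ≤ 1 := by
  have hAv : A *ᵥ (A⁻¹ *ᵥ x) = x := by rw [mulVec_mulVec, mul_nonsing_inv A hA, one_mulVec]
  have hquad := hx (A⁻¹ *ᵥ x)
  rw [hAv, dotProduct_comm _ x] at hquad
  nlinarith

end QuadraticForm

/-- Let `x_{(1)}, …, x_{(N)} ∈ ℝ^d`, let `m_1, …, m_N` be nonnegative integers, and let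
`A = I_d + Σ_{i=1}^N m_i · x_{(i)} x_{(i)}ᵀ`.  Then for every `n` with `m_n ≥ 1`,
`‖x_{(n)}‖_{A⁻¹} ≤ √(d / m_n)`; equivalently, `m_n · x_{(n)}ᵀ A⁻¹ x_{(n)} ≤ d`. -/
theorem ucb_width_bound_from_pull_counts
    {d N : ℕ} (x : Fin N → Fin d → ℝ) (m : Fin N → ℕ)
    (A : Matrix (Fin d) (Fin d) ℝ)
    (hA : A = 1 + ∑ i, (m i : ℝ) • vecMulVec (x i) (x i))
    (n : Fin N) (hm : 1 ≤ m n) :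
    Real.sqrt (x n ⬝ᵥ A⁻¹.mulVec (x n)) ≤ Real.sqrt ((d : ℝ) / m n)
      ∧ (m n : ℝ) * (x n ⬝ᵥ A⁻¹.mulVec (x n)) ≤ (d : ℝ) := by
  have hApd : A.PosDef := hA ▸ PosDef.one.add_posSemidef (posSemidef_sum _ fun i _ =>
    (posSemidef_vecMulVec_self_star (x i)).smul (Nat.cast_nonneg (m i)))
  have hquad (y : Fin d → ℝ) : (m n : ℝ) * (x n ⬝ᵥ y) ^ 2 ≤ y ⬝ᵥ A *ᵥ y := by
    rw [hA, dotProduct_one_add_sum_smul_vecMulVec_mulVec]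
    have hsingle := single_le_sum (f := fun i => (m i : ℝ) * (x i ⬝ᵥ y) ^ 2)
      (fun i _ => by positivity) (mem_univ n)
    have hyy : 0 ≤ y ⬝ᵥ y := by simpa using dotProduct_self_star_nonneg y
    linarith
  have hle_one := mul_dotProduct_inv_mulVec_le_one
    ((isUnit_iff_isUnit_det A).mp hApd.isUnit) (Nat.cast_nonneg (m n)) hquad
  have hle_d : (m n : ℝ) * (x n ⬝ᵥ A⁻¹ *ᵥ x n) ≤ d := by
    rcases Nat.eq_zero_or_pos d with rfl | hd
    · simp [dotProduct]
    · exact hle_one.trans (by exact_mod_cast hd)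
  refine ⟨Real.sqrt_le_sqrt ?_, hle_d⟩
  rw [le_div_iff₀ (by exact_mod_cast hm)]
  linarith
end

section
/- (Sufficient condition for selecting the optimal context under pure exploitation.) Let A ∈ ℝ^{d×d} be positive definite, let α > 0, and let θ, θ⋆ ∈ ℝ^d satisfy ‖θ − θ⋆‖_A ≤ α. Let x⋆, x_{(2)}, …, x_{(N)} ∈ ℝ^d be vectors such that for every n ∈ {2, …, N}, ⟨x⋆, θ⋆⟩ − ⟨x_{(n)}, θ⋆⟩ > α ‖x⋆‖_{A⁻¹} + α ‖x_{(n)}‖_{A⁻¹}. Then ⟨x⋆, θ⟩ > ⟨x_{(n)}, θ⟩ for every n ∈ {2, …, N}; consequently, in a slot of AdaLinUCB where L̃_t = 1 (pure exploitation of the estimate θ = θ_{t−1} with A = A_{t−1}), the arm with the optimal context x⋆ is pulled and the one-slot nominal regret is zero. -/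
/-!
Write `θ = θ⋆ + v`. Cauchy–Schwarz for the inner product `⟨u, w⟩_A = uᵀ A w`, applied to `A⁻¹ x`
and `v`, gives `|⟨x, v⟩| ≤ ‖x‖_{A⁻¹} ‖v‖_A ≤ α ‖x‖_{A⁻¹}`. So passing from `θ⋆` to `θ` changes
the indices of `x⋆` and `x_{(n)}` by at most `α ‖x⋆‖_{A⁻¹}` and `α ‖x_{(n)}‖_{A⁻¹}`, which the
gap hypothesis strictly dominates.
-/

open Matrix

namespace Matrix

variable {n : Type*} [Fintype n]

theorem PosSemidef.dotProduct_mulVec_sq_le {M : Matrix n n ℝ} (hM : M.PosSemidef) (u w : n → ℝ) :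
    (u ⬝ᵥ M *ᵥ w) ^ 2 ≤ (u ⬝ᵥ M *ᵥ u) * (w ⬝ᵥ M *ᵥ w) := by
  classical
  have hsymm : LinearMap.IsSymm M.toBilin' :=
    LinearMap.BilinForm.isSymm_iff.mp (isSymm_toBilin'_iff_isSymm.mpr hM.isHermitian)
  have hnonneg (x : n → ℝ) : 0 ≤ M.toBilin' x x := by
    rw [toBilin'_apply']
    exact hM.dotProduct_mulVec_nonneg x
  simpa only [toBilin'_apply'] using M.toBilin'.apply_sq_le_of_symm hnonneg hsymm u w

variable [DecidableEq n]

theorem PosDef.dotProduct_sq_le {A : Matrix n n ℝ} (hA : A.PosDef) (x v : n → ℝ) :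
    (x ⬝ᵥ v) ^ 2 ≤ (x ⬝ᵥ A⁻¹ *ᵥ x) * (v ⬝ᵥ A *ᵥ v) := by
  have hdet : IsUnit A.det := hA.isUnit.map detMonoidHom
  have hsymm : Aᵀ = A := hA.isHermitian.eq
  have hinv : A⁻¹ᵀ = A⁻¹ := by rw [transpose_nonsing_inv, hsymm]
  have hxv : A⁻¹ *ᵥ x ⬝ᵥ A *ᵥ v = x ⬝ᵥ v := by
    rw [dotProduct_mulVec, vecMul_mulVec, hinv, nonsing_inv_mul _ hdet, vecMul_one]
  have hxx : A⁻¹ *ᵥ x ⬝ᵥ A *ᵥ (A⁻¹ *ᵥ x) = x ⬝ᵥ A⁻¹ *ᵥ x := by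
    rw [mulVec_mulVec, mul_nonsing_inv _ hdet, one_mulVec, dotProduct_comm]
  simpa only [hxv, hxx] using hA.posSemidef.dotProduct_mulVec_sq_le (A⁻¹ *ᵥ x) v

theorem PosDef.abs_dotProduct_le {A : Matrix n n ℝ} (hA : A.PosDef) (x v : n → ℝ) :
    |x ⬝ᵥ v| ≤ √(x ⬝ᵥ A⁻¹ *ᵥ x) * √(v ⬝ᵥ A *ᵥ v) := by
  have hx : 0 ≤ x ⬝ᵥ A⁻¹ *ᵥ x := hA.inv.posSemidef.dotProduct_mulVec_nonneg x
  rw [← Real.sqrt_sq_eq_abs, ← Real.sqrt_mul hx]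
  exact Real.sqrt_le_sqrt (hA.dotProduct_sq_le x v)

end Matrix

theorem pure_exploitation_selects_optimal_context_general
    {d N : ℕ} (A : Matrix (Fin d) (Fin d) ℝ) (hA : A.PosDef)
    (α : ℝ) (θ θstar : Fin d → ℝ)
    (hconf : Real.sqrt ((θ - θstar) ⬝ᵥ A.mulVec (θ - θstar)) ≤ α)
    (xstar : Fin d → ℝ) (xsub : Fin N → Fin d → ℝ)
    (hgap : ∀ n : Fin N,
      α * Real.sqrt (xstar ⬝ᵥ A⁻¹.mulVec xstar)
          + α * Real.sqrt (xsub n ⬝ᵥ A⁻¹.mulVec (xsub n))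
        < xstar ⬝ᵥ θstar - xsub n ⬝ᵥ θstar) :
    ∀ n : Fin N, xsub n ⬝ᵥ θ < xstar ⬝ᵥ θ := by
  have hdev (x : Fin d → ℝ) : |x ⬝ᵥ (θ - θstar)| ≤ α * √(x ⬝ᵥ A⁻¹ *ᵥ x) :=
    calc |x ⬝ᵥ (θ - θstar)| ≤ √(x ⬝ᵥ A⁻¹ *ᵥ x) * √((θ - θstar) ⬝ᵥ A *ᵥ (θ - θstar)) :=
          hA.abs_dotProduct_le x _
      _ ≤ √(x ⬝ᵥ A⁻¹ *ᵥ x) * α := by gcongr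
      _ = α * √(x ⬝ᵥ A⁻¹ *ᵥ x) := mul_comm _ _
  intro n
  have hstar := (abs_le.mp (hdev xstar)).1
  have hsub := (abs_le.mp (hdev (xsub n))).2
  rw [dotProduct_sub] at hstar hsub
  linarith [hgap n]

/-- **Sufficient condition for selecting the optimal context under pure exploitation.**
Let `A ∈ ℝ^{d×d}` be positive definite, `α > 0`, and let `θ, θ⋆ ∈ ℝ^d` satisfy
`‖θ − θ⋆‖_A ≤ α`.  Let `x⋆, x_{(2)}, …, x_{(N)} ∈ ℝ^d` (the suboptimal context
values indexed by `Fin N`) be such that for every `n`,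
`⟨x⋆, θ⋆⟩ − ⟨x_{(n)}, θ⋆⟩ > α ‖x⋆‖_{A⁻¹} + α ‖x_{(n)}‖_{A⁻¹}`.
Then `⟨x⋆, θ⟩ > ⟨x_{(n)}, θ⟩` for every `n`; consequently, in a pure-exploitation
slot of AdaLinUCB (where the index of a context `x` is `⟨x, θ⟩`), the arm with
the optimal context `x⋆` is pulled and the one-slot nominal regret is zero. -/
theorem pure_exploitation_selects_optimal_context
    {d N : ℕ} (A : Matrix (Fin d) (Fin d) ℝ) (hA : A.PosDef)
    (α : ℝ) (hα : 0 < α) (θ θstar : Fin d → ℝ)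
    (hconf : Real.sqrt ((θ - θstar) ⬝ᵥ A.mulVec (θ - θstar)) ≤ α)
    (xstar : Fin d → ℝ) (xsub : Fin N → Fin d → ℝ)
    (hgap : ∀ n : Fin N,
      α * Real.sqrt (xstar ⬝ᵥ A⁻¹.mulVec xstar)
          + α * Real.sqrt (xsub n ⬝ᵥ A⁻¹.mulVec (xsub n))
        < xstar ⬝ᵥ θstar - xsub n ⬝ᵥ θstar) :
    ∀ n : Fin N, xsub n ⬝ᵥ θ < xstar ⬝ᵥ θ :=
  pure_exploitation_selects_optimal_context_general A hA α θ θstar hconf xstar xsub hgap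
end
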